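/- Fix σ ∈ ℝ^{n-1} with σ_i + 1 ≠ 0 for i = 1,...,n-2 and σ_{n-1} = 0. Then x̄ defined by x̄_i = (σ_{i-1} + 2)/(2(σ_i + 1)) for i = 1,...,n-1 (with the convention σ_0 = 0) and x̄_n = x̄_{n-1}² is a critical point of x ↦ Ξ(x, σ), i.e., ∇_x Ξ(x̄, σ) = 0. -/

import Mathlib

noncomputable def Xi (m : ℕ) (α : ℝ) (x : Fin (m+1) → ℝ) (σ : Fin m → ℝ) : ℝ :=
  ∑ i : Fin m, ((x i.castSucc - 1)^2 + σ i * ((x i.castSucc)^2 - x i.succ) - (σ i)^2 / (2*α))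

/-- The backward shift σ_{i-1}, with the convention σ_0 = 0. -/
noncomputable def spre (m : ℕ) (σ : Fin m → ℝ) (i : Fin m) : ℝ :=
  if h : 0 < (i : ℕ) then σ ⟨(i : ℕ) - 1, by have := i.isLt; omega⟩ else 0

/-!
The partial derivatives of `Ξ(·, σ)` are `2(x_j - 1) + 2σ_j x_j - σ_{j-1}` for `j < n` and
`-σ_{n-1}` for `j = n`. The formula for `x̄_j` is exactly the solution of
`2(σ_j + 1) x_j = σ_{j-1} + 2`, so the first family vanishes, and `σ_{n-1} = 0` kills the
last one.
-/

open ContinuousLinearMap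

theorem hasFDerivAt_Xi (m : ℕ) (α : ℝ) (σ : Fin m → ℝ) (x : Fin (m+1) → ℝ) :
    HasFDerivAt (fun y => Xi m α y σ)
      (∑ i : Fin m, ((2 * (x i.castSucc - 1) + 2 * σ i * x i.castSucc) •
        (proj i.castSucc : (Fin (m+1) → ℝ) →L[ℝ] ℝ) - σ i • proj i.succ)) x := by
  refine HasFDerivAt.fun_sum fun i _ => ?_
  have hc : HasFDerivAt (fun y : Fin (m+1) → ℝ => y i.castSucc) (proj i.castSucc) x :=
    hasFDerivAt_apply (𝕜 := ℝ) i.castSucc x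
  have hs : HasFDerivAt (fun y : Fin (m+1) → ℝ => y i.succ) (proj i.succ) x :=
    hasFDerivAt_apply (𝕜 := ℝ) i.succ x
  have h := ((HasFDerivAt.pow (hc.sub_const 1) 2).fun_add
    (((HasFDerivAt.pow hc 2).fun_sub hs).const_mul (σ i))).sub_const ((σ i)^2 / (2*α))
  convert h using 1
  ext v
  simp only [sub_apply, add_apply, smul_apply, proj_apply, smul_eq_mul]
  ring

theorem spre_zero (k : ℕ) (σ : Fin (k+1) → ℝ) : spre (k+1) σ 0 = 0 := by
  simp [spre]

theorem spre_succ (k : ℕ) (σ : Fin (k+1) → ℝ) (i : Fin k) :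
    spre (k+1) σ i.succ = σ i.castSucc :=
  dif_pos i.val.succ_pos

theorem sum_spre_mul_castSucc_add (k : ℕ) (σ : Fin (k+1) → ℝ) (v : Fin (k+2) → ℝ) :
    ∑ i : Fin (k+1), spre (k+1) σ i * v i.castSucc + σ (Fin.last k) * v (Fin.last (k+1))
      = ∑ i : Fin (k+1), σ i * v i.succ := by
  rw [Fin.sum_univ_succ, Fin.sum_univ_castSucc (f := fun i => σ i * v i.succ), spre_zero,
    zero_mul, zero_add]
  simp only [spre_succ, Fin.succ_castSucc, Fin.succ_last]

theorem xbar_critical_of_Xi (m : ℕ) (hm : 1 ≤ m) (α : ℝ)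
    (σ : Fin m → ℝ) (hσ : ∀ i : Fin m, σ i + 1 ≠ 0)
    (hlast : σ ⟨m - 1, by omega⟩ = 0)
    (xbar : Fin (m+1) → ℝ)
    (hx : ∀ i : Fin m, xbar i.castSucc = (spre m σ i + 2) / (2 * (σ i + 1))) :
    fderiv ℝ (fun x => Xi m α x σ) xbar = 0 := by
  have hcoef (i : Fin m) :
      2 * (xbar i.castSucc - 1) + 2 * σ i * xbar i.castSucc = spre m σ i := by
    have hx' : 2 * (σ i + 1) * xbar i.castSucc = spre m σ i + 2 := by
      rw [hx i, mul_div_cancel₀ _ (mul_ne_zero two_ne_zero (hσ i))]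
    linear_combination hx'
  obtain ⟨k, rfl⟩ : ∃ k, m = k + 1 := ⟨m - 1, by omega⟩
  have hσk : σ (Fin.last k) = 0 := hlast
  rw [(hasFDerivAt_Xi _ α σ xbar).fderiv]
  ext v
  simp only [sum_apply, sub_apply, smul_apply, proj_apply, smul_eq_mul, zero_apply, hcoef,
    Finset.sum_sub_distrib, sub_eq_zero]
  simpa [hσk] using sum_spre_mul_castSucc_add k σ v
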